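/- arXiv:1609.03737 — 2 statements merged into one kernel-verified Lean document; each statement's English description precedes it below -/
import Mathlib

section
/- For item sizes s_1,...,s_n ≥ 0, demand D ≥ 0, and any set A ⊆ [n] with ∑_{i∈A} s_i < D, every x ∈ {0,1}^n with ∑_i s_i x_i ≥ D satisfies the knapsack cover inequality ∑_{i∉A} min(s_i, U) · x_i ≥ U, where U = D − ∑_{i∈A} s_i. -/
open Finset

/-- Either some chosen item already has size `≥ U`, or truncation changes no chosen size. -/
theorem le_sum_min_mul_of_le_sum {ι : Type*} (S : Finset ι) {s x : ι → ℝ} {U : ℝ}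
    (hs : ∀ i ∈ S, 0 ≤ s i) (hx : ∀ i ∈ S, x i = 0 ∨ x i = 1) (hU : 0 ≤ U)
    (hcover : U ≤ ∑ i ∈ S, s i * x i) :
    U ≤ ∑ i ∈ S, min (s i) U * x i := by
  by_cases hbig : ∃ i ∈ S, x i = 1 ∧ U ≤ s i
  · obtain ⟨i, hi, hxi, hsi⟩ := hbig
    have hnonneg : ∀ j ∈ S, 0 ≤ min (s j) U * x j := fun j hj =>
      mul_nonneg (le_min (hs j hj) hU) (by rcases hx j hj with h | h <;> simp [h])
    calc U = min (s i) U * x i := by rw [hxi, min_eq_right hsi, mul_one]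
      _ ≤ ∑ j ∈ S, min (s j) U * x j := single_le_sum hnonneg hi
  · push Not at hbig
    calc U ≤ ∑ i ∈ S, s i * x i := hcover
      _ = ∑ i ∈ S, min (s i) U * x i := sum_congr rfl fun i hi => by
        rcases hx i hi with h | h
        · simp [h]
        · rw [min_eq_left (hbig i hi h).le]

theorem knapsack_cover_valid_general (n : ℕ) (s : Fin n → ℝ) (D : ℝ)
    (hs : ∀ i, 0 ≤ s i)
    (A : Finset (Fin n)) (hA : ∑ i ∈ A, s i < D)
    (x : Fin n → ℝ) (hx : ∀ i, x i = 0 ∨ x i = 1)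
    (hfeas : D ≤ ∑ i, s i * x i) :
    D - ∑ i ∈ A, s i ≤
      ∑ i ∈ Aᶜ, min (s i) (D - ∑ i ∈ A, s i) * x i := by
  have hA_load : ∑ i ∈ A, s i * x i ≤ ∑ i ∈ A, s i := sum_le_sum fun i _ =>
    mul_le_of_le_one_right (hs i) (by rcases hx i with h | h <;> simp [h])
  have hresidual : D - ∑ i ∈ A, s i ≤ ∑ i ∈ Aᶜ, s i * x i := by
    rw [← sum_add_sum_compl A] at hfeas
    linarith
  exact le_sum_min_mul_of_le_sum Aᶜ (fun i _ => hs i) (fun i _ => hx i) (by linarith) hresidual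

/-- Knapsack cover inequality validity. -/
theorem knapsack_cover_valid (n : ℕ) (s : Fin n → ℝ) (D : ℝ)
    (hs : ∀ i, 0 ≤ s i) (hD : 0 ≤ D)
    (A : Finset (Fin n)) (hA : ∑ i ∈ A, s i < D)
    (x : Fin n → ℝ) (hx : ∀ i, x i = 0 ∨ x i = 1)
    (hfeas : D ≤ ∑ i, s i * x i) :
    D - ∑ i ∈ A, s i ≤
      ∑ i ∈ Aᶜ, min (s i) (D - ∑ i ∈ A, s i) * x i :=
  knapsack_cover_valid_general n s D hs A hA x hx hfeas
end

section
/- Fix an infeasible A and feasible solution (x, y) for single-demand facility location, with B = {i : y_i = 1}, U = D − s(A) > 0, s'_i = min(s_i, U). For any partition F \ A = F₁ ⊔ F₂, the flow cover inequality holds: s'(F₁ ∩ B) + x(F₂ ∩ B) ≥ U, where x(J) = ∑_{i∈J} x_i D. -/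
/-!
Write `x i * D` for the flow served by facility `i`. It vanishes at closed facilities, is at most
`s i`, and the flows sum to `D`; so the flow served outside `A`, i.e. by the open facilities of
`F₁ ∪ F₂`, is at least `U`. Truncation at `U` is subadditive on nonnegative numbers, hence
`U = min (x(F₁ ∩ B) + x(F₂ ∩ B)) U ≤ ∑_{F₁ ∩ B} min (x i * D) U + x(F₂ ∩ B) ≤ s'(F₁ ∩ B) + x(F₂ ∩ B)`.
-/

open Finset

section Truncation

variable {α ι : Type*} [AddCommMonoid α] [LinearOrder α] [IsOrderedAddMonoid α]

theorem min_add_le_min_add_min {a b c : α} (ha : 0 ≤ a) (hb : 0 ≤ b) (hc : 0 ≤ c) :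
    min (a + b) c ≤ min a c + min b c := by
  rcases le_total c a with hca | hac
  · rw [min_eq_right hca]
    exact (min_le_right _ _).trans (le_add_of_nonneg_right (le_min hb hc))
  rcases le_total c b with hcb | hbc
  · rw [min_eq_right hcb]
    exact (min_le_right _ _).trans (le_add_of_nonneg_left (le_min ha hc))
  rw [min_eq_left hac, min_eq_left hbc]
  exact min_le_left _ _

theorem Finset.min_sum_le_sum_min (s : Finset ι) {f : ι → α} {c : α}
    (hf : ∀ i ∈ s, 0 ≤ f i) (hc : 0 ≤ c) :
    min (∑ i ∈ s, f i) c ≤ ∑ i ∈ s, min (f i) c := by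
  classical
  induction s using Finset.induction_on with
  | empty => simp [hc]
  | insert j s hj ih =>
    rw [sum_insert hj, sum_insert hj]
    have hfs : ∀ i ∈ s, 0 ≤ f i := fun i hi => hf i (mem_insert_of_mem hi)
    calc min (f j + ∑ i ∈ s, f i) c ≤ min (f j) c + min (∑ i ∈ s, f i) c :=
          min_add_le_min_add_min (hf j (mem_insert_self j s)) (sum_nonneg hfs) hc
      _ ≤ min (f j) c + ∑ i ∈ s, min (f i) c := add_le_add_right (ih hfs) _

end Truncation

section FacilityLocation

variable {n : ℕ} {s x y : Fin n → ℝ} {D : ℝ}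

theorem flow_eq_zero_of_ne_one (hy : ∀ i, y i = 0 ∨ y i = 1)
    (hx : ∀ i, 0 ≤ x i * D ∧ x i * D ≤ s i * y i) {i : Fin n} (hi : y i ≠ 1) :
    x i * D = 0 := by
  have hy0 : y i = 0 := (hy i).resolve_right hi
  have := hx i
  rw [hy0, mul_zero] at this
  exact le_antisymm this.2 this.1

theorem flow_le_capacity (hs : ∀ i, 0 ≤ s i) (hy : ∀ i, y i = 0 ∨ y i = 1)
    (hx : ∀ i, 0 ≤ x i * D ∧ x i * D ≤ s i * y i) (i : Fin n) :
    x i * D ≤ s i := by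
  by_cases hi : y i = 1
  · simpa [hi] using (hx i).2
  · rw [flow_eq_zero_of_ne_one hy hx hi]
    exact hs i

theorem residual_le_flow_compl (hxsum : ∑ i, x i = 1) (hcap : ∀ i, x i * D ≤ s i)
    (A : Finset (Fin n)) :
    D - ∑ i ∈ A, s i ≤ ∑ i ∈ Aᶜ, x i * D := by
  have htotal : ∑ i ∈ A, x i * D + ∑ i ∈ Aᶜ, x i * D = D := by
    rw [sum_add_sum_compl, ← sum_mul, hxsum, one_mul]
  have hA : ∑ i ∈ A, x i * D ≤ ∑ i ∈ A, s i := sum_le_sum fun i _ => hcap i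
  linarith

end FacilityLocation

theorem flow_cover_valid_general (n : ℕ) (s : Fin n → ℝ) (D : ℝ)
    (hs : ∀ i, 0 ≤ s i)
    (x y : Fin n → ℝ)
    (hy : ∀ i, y i = 0 ∨ y i = 1)
    (hxsum : (∑ i, x i) = 1)
    (hx : ∀ i, 0 ≤ x i * D ∧ x i * D ≤ s i * y i)
    (A F1 F2 : Finset (Fin n))
    (hApart : Disjoint F1 F2) (hcover : F1 ∪ F2 = Aᶜ)
    (hAinf : ∑ i ∈ A, s i < D) :
    D - ∑ i ∈ A, s i ≤
      (∑ i ∈ F1 ∩ Finset.univ.filter (fun i => y i = 1),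
          min (s i) (D - ∑ j ∈ A, s j))
      + (∑ i ∈ F2 ∩ Finset.univ.filter (fun i => y i = 1), x i * D) := by
  set U := D - ∑ i ∈ A, s i
  set B := univ.filter (fun i => y i = 1)
  have hU : 0 ≤ U := sub_nonneg.2 hAinf.le
  have hflow_open : ∀ F : Finset (Fin n), ∑ i ∈ F ∩ B, x i * D = ∑ i ∈ F, x i * D := fun F => by
    rw [inter_filter, inter_univ]
    exact sum_filter_of_ne fun i _ h => not_imp_comm.1 (flow_eq_zero_of_ne_one hy hx) h
  have hsplit : ∑ i ∈ F1 ∩ B, x i * D + ∑ i ∈ F2 ∩ B, x i * D = ∑ i ∈ Aᶜ, x i * D := by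
    rw [hflow_open, hflow_open, ← sum_union hApart, hcover]
  have hF2 : 0 ≤ ∑ i ∈ F2 ∩ B, x i * D := sum_nonneg fun i _ => (hx i).1
  calc U = min (∑ i ∈ Aᶜ, x i * D) U :=
        (min_eq_right (residual_le_flow_compl hxsum (flow_le_capacity hs hy hx) A)).symm
    _ ≤ min (∑ i ∈ F1 ∩ B, x i * D) U + ∑ i ∈ F2 ∩ B, x i * D := by
        rw [← hsplit, ← min_add_add_right]
        exact min_le_min_left _ (le_add_of_nonneg_right hF2)
    _ ≤ ∑ i ∈ F1 ∩ B, min (x i * D) U + ∑ i ∈ F2 ∩ B, x i * D :=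
        add_le_add_left (min_sum_le_sum_min _ (fun i _ => (hx i).1) hU) _
    _ ≤ ∑ i ∈ F1 ∩ B, min (s i) U + ∑ i ∈ F2 ∩ B, x i * D := by
        gcongr with i
        exact flow_le_capacity hs hy hx i

/-- Validity of the flow cover inequalities for single-demand facility
location. -/
theorem flow_cover_valid (n : ℕ) (s : Fin n → ℝ) (D : ℝ)
    (hs : ∀ i, 0 ≤ s i) (hD : 0 < D)
    (x y : Fin n → ℝ)
    (hy : ∀ i, y i = 0 ∨ y i = 1)
    (hxsum : (∑ i, x i) = 1)
    (hx : ∀ i, 0 ≤ x i * D ∧ x i * D ≤ s i * y i)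
    (A F1 F2 : Finset (Fin n))
    (hApart : Disjoint F1 F2) (hcover : F1 ∪ F2 = Aᶜ)
    (hAinf : ∑ i ∈ A, s i < D) :
    D - ∑ i ∈ A, s i ≤
      (∑ i ∈ F1 ∩ Finset.univ.filter (fun i => y i = 1),
          min (s i) (D - ∑ j ∈ A, s j))
      + (∑ i ∈ F2 ∩ Finset.univ.filter (fun i => y i = 1), x i * D) :=
  flow_cover_valid_general n s D hs x y hy hxsum hx A F1 F2 hApart hcover hAinf
end
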